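/- arXiv:1602.04098 — 2 statements merged into one kernel-verified Lean document; each statement's English description precedes it below -/
import Mathlib

section
/- Let ρ = (r_{ij}) be a 4×4 density matrix on ℂ²⊗ℂ² and define C(ρ) = CNOT (ρ − ρ₁⊗ρ₂) CNOT where ρ₁, ρ₂ are the partial traces. Then Tr((I⊗|1⟩⟨1|) C(ρ)) = 2(r₂₂ r₃₃ − r₁₁ r₄₄). -/
open Matrix Kronecker ComplexOrder

noncomputable def CNOT : Matrix (Fin 2 × Fin 2) (Fin 2 × Fin 2) ℂ :=
  Matrix.of fun p q => if p.1 = q.1 ∧ p.2 = q.1 + q.2 then 1 else 0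

noncomputable def P1m : Matrix (Fin 2) (Fin 2) ℂ := !![0, 0; 0, 1]

noncomputable def ptr2 (ρ : Matrix (Fin 2 × Fin 2) (Fin 2 × Fin 2) ℂ) :
    Matrix (Fin 2) (Fin 2) ℂ :=
  Matrix.of fun i i' => ∑ j, ρ (i, j) (i', j)

noncomputable def ptr1 (ρ : Matrix (Fin 2 × Fin 2) (Fin 2 × Fin 2) ℂ) :
    Matrix (Fin 2) (Fin 2) ℂ :=
  Matrix.of fun j j' => ∑ i, ρ (i, j) (i, j')

noncomputable def prob4 (τ : Matrix (Fin 2 × Fin 2) (Fin 2 × Fin 2) ℂ) : ℂ :=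
  (((1 : Matrix (Fin 2) (Fin 2) ℂ) ⊗ₖ P1m) * τ).trace

noncomputable def prob2 (τ : Matrix (Fin 2) (Fin 2) ℂ) : ℂ :=
  (P1m * τ).trace

/-! CNOT is the permutation matrix of `|a b⟩ ↦ |a, a + b⟩`, so conjugating by it permutes the
entries of `ρ - ρ₁ ⊗ ρ₂`, and the projector `I ⊗ |1⟩⟨1|` reads off the diagonal entries at
`|01⟩` and `|10⟩`. The diagonal of `ρ₁ ⊗ ρ₂` is a product of marginal sums, and after
multiplying the linear terms by `Tr ρ = 1` everything but `2 (r₂₂ r₃₃ − r₁₁ r₄₄)` cancels. -/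

def cnotPerm : Equiv.Perm (Fin 2 × Fin 2) :=
  Function.Involutive.toPerm (fun q => (q.1, q.1 + q.2)) fun q => by
    fin_cases q <;> rfl

theorem CNOT_eq_toMatrix : CNOT = cnotPerm.toPEquiv.toMatrix := by
  ext p q
  simp only [CNOT, of_apply, PEquiv.toMatrix_apply, Equiv.toPEquiv_apply, Option.mem_def,
    Option.some.injEq]
  congr 1
  revert p q
  decide

theorem CNOT_mul_mul_CNOT (τ : Matrix (Fin 2 × Fin 2) (Fin 2 × Fin 2) ℂ) :
    CNOT * τ * CNOT = τ.submatrix cnotPerm cnotPerm := by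
  rw [CNOT_eq_toMatrix, PEquiv.toMatrix_toPEquiv_mul, PEquiv.mul_toMatrix_toPEquiv,
    submatrix_submatrix]
  rfl

theorem prob4_eq_add (τ : Matrix (Fin 2 × Fin 2) (Fin 2 × Fin 2) ℂ) :
    prob4 τ = τ (0, 1) (0, 1) + τ (1, 1) (1, 1) := by
  simp [prob4, P1m, trace, Fintype.sum_prod_type, mul_apply, one_apply]

theorem trace_fin_two_prod (ρ : Matrix (Fin 2 × Fin 2) (Fin 2 × Fin 2) ℂ) :
    ρ.trace = ρ (0, 0) (0, 0) + ρ (0, 1) (0, 1) + ρ (1, 0) (1, 0) + ρ (1, 1) (1, 1) := by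
  simp [trace, Fintype.sum_prod_type, add_assoc]

theorem ptr2_apply_self (ρ : Matrix (Fin 2 × Fin 2) (Fin 2 × Fin 2) ℂ) (i : Fin 2) :
    ptr2 ρ i i = ρ (i, 0) (i, 0) + ρ (i, 1) (i, 1) := by
  simp [ptr2]

theorem ptr1_apply_self (ρ : Matrix (Fin 2 × Fin 2) (Fin 2 × Fin 2) ℂ) (j : Fin 2) :
    ptr1 ρ j j = ρ (0, j) (0, j) + ρ (1, j) (1, j) := by
  simp [ptr1]

theorem holistic_correction_value_general (ρ : Matrix (Fin 2 × Fin 2) (Fin 2 × Fin 2) ℂ)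
    (hρ1 : ρ.trace = 1) :
    prob4 (CNOT * (ρ - ptr2 ρ ⊗ₖ ptr1 ρ) * CNOT) =
      2 * (ρ (0, 1) (0, 1) * ρ (1, 0) (1, 0) - ρ (0, 0) (0, 0) * ρ (1, 1) (1, 1)) := by
  rw [CNOT_mul_mul_CNOT, prob4_eq_add]
  have h01 : cnotPerm (0, 1) = (0, 1) := rfl
  have h11 : cnotPerm (1, 1) = (1, 0) := rfl
  simp only [submatrix_apply, h01, h11, Matrix.sub_apply, kroneckerMap_apply, ptr2_apply_self,
    ptr1_apply_self]
  rw [trace_fin_two_prod] at hρ1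
  linear_combination (-(ρ (0, 1) (0, 1) + ρ (1, 0) (1, 0))) * hρ1

theorem holistic_correction_value (ρ : Matrix (Fin 2 × Fin 2) (Fin 2 × Fin 2) ℂ)
    (hρ : ρ.PosSemidef) (hρ1 : ρ.trace = 1) :
    prob4 (CNOT * (ρ - ptr2 ρ ⊗ₖ ptr1 ρ) * CNOT) =
      2 * (ρ (0, 1) (0, 1) * ρ (1, 0) (1, 0) - ρ (0, 0) (0, 0) * ρ (1, 1) (1, 1)) :=
  holistic_correction_value_general ρ hρ1
end

section
/- Let ρ = !![a₁, a; a*, 1−a₁] and σ = !![b₁, b; b*, 1−b₁] be 2×2 density matrices. Then CNOT (ρ ⊗ σ) CNOT is factorizable (equal to the Kronecker product of its two partial traces) if and only if at least one of the following holds: (1) a = 0 and b₁ = ½ and b is real; (2) ρ = P₀ = |0⟩⟨0| or ρ = P₁ = |1⟩⟨1|; (3) σ = ½·!![1,1;1,1] or σ = ½·!![1,−1;−1,1]. -/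
/-!
Conjugation by CNOT permutes entries:
`(CNOT (ρ ⊗ σ) CNOT) (i, j) (k, l) = ρ i k * σ (i + j) (k + l)`.
Factorizability at the entries `((0,0),(0,0))` and `((0,0),(0,1))` reads
`a₁(1 - a₁)(2b₁ - 1) = 0` and `a₁(1 - a₁)(b - b*) = 0`; when `a₁(1 - a₁) ≠ 0` these force
`b₁ = 1/2`, `b` real, and then the entry `((0,0),(1,1))` gives `a(2b - 1)(2b + 1) = 0`.
When `a₁(1 - a₁) = 0`, positivity (`|a|² ≤ a₁(1 - a₁)` from `det ρ ≥ 0`) gives `a = 0`.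
Conversely, in each case CNOT maps `ρ ⊗ σ` to a product `X ⊗ Y` of trace one
(`P₁ ⊗ σ ↦ P₁ ⊗ XσX`, `ρ ⊗ |−⟩⟨−| ↦ ZρZ ⊗ |−⟩⟨−|`, otherwise `ρ ⊗ σ` is fixed),
and such a product is its own product of partial traces.
-/

open Matrix Kronecker ComplexOrder

def IsFactorizable (τ : Matrix (Fin 2 × Fin 2) (Fin 2 × Fin 2) ℂ) : Prop :=
  τ = ptr2 τ ⊗ₖ ptr1 τ

lemma cnot_mul_cnot : CNOT * CNOT = 1 := by
  ext ⟨i, j⟩ ⟨k, l⟩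
  fin_cases i <;> fin_cases j <;> fin_cases k <;> fin_cases l <;>
    simp [CNOT, Matrix.mul_apply, Fintype.sum_prod_type, Fin.sum_univ_two]

lemma trace_cnot_conj (M : Matrix (Fin 2 × Fin 2) (Fin 2 × Fin 2) ℂ) :
    (CNOT * M * CNOT).trace = M.trace := by
  rw [Matrix.trace_mul_comm, ← Matrix.mul_assoc, cnot_mul_cnot, Matrix.one_mul]

lemma cnot_conj_apply (M : Matrix (Fin 2 × Fin 2) (Fin 2 × Fin 2) ℂ) (i j k l : Fin 2) :
    (CNOT * M * CNOT) (i, j) (k, l) = M (i, i + j) (k, k + l) := by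
  fin_cases i <;> fin_cases j <;> fin_cases k <;> fin_cases l <;>
    simp [CNOT, Matrix.mul_apply, Fintype.sum_prod_type, Fin.sum_univ_two]

lemma ptr2_kronecker (X Y : Matrix (Fin 2) (Fin 2) ℂ) : ptr2 (X ⊗ₖ Y) = Y.trace • X := by
  ext i k
  simp only [ptr2, kroneckerMap_apply, Fin.sum_univ_two, of_apply, trace, diag_apply,
    Matrix.smul_apply, smul_eq_mul]
  ring

lemma ptr1_kronecker (X Y : Matrix (Fin 2) (Fin 2) ℂ) : ptr1 (X ⊗ₖ Y) = X.trace • Y := by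
  ext j l
  simp only [ptr1, kroneckerMap_apply, Fin.sum_univ_two, of_apply, trace, diag_apply,
    Matrix.smul_apply, smul_eq_mul]
  ring

lemma isFactorizable_kronecker {X Y : Matrix (Fin 2) (Fin 2) ℂ} (h : X.trace * Y.trace = 1) :
    IsFactorizable (X ⊗ₖ Y) := by
  rw [IsFactorizable, ptr2_kronecker, ptr1_kronecker, Matrix.smul_kronecker, Matrix.kronecker_smul,
    smul_smul, mul_comm, h, one_smul]

lemma isFactorizable_cnot_conj_of_apply_eq {ρ σ X Y : Matrix (Fin 2) (Fin 2) ℂ}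
    (hρ1 : ρ.trace = 1) (hσ1 : σ.trace = 1)
    (h : ∀ i j k l, ρ i k * σ (i + j) (k + l) = X i k * Y j l) :
    IsFactorizable (CNOT * (ρ ⊗ₖ σ) * CNOT) := by
  have hτ : CNOT * (ρ ⊗ₖ σ) * CNOT = X ⊗ₖ Y := by
    ext ⟨i, j⟩ ⟨k, l⟩
    simpa [cnot_conj_apply] using h i j k l
  have htr := trace_cnot_conj (ρ ⊗ₖ σ)
  rw [hτ, Matrix.trace_kronecker, Matrix.trace_kronecker, hρ1, hσ1, one_mul] at htr
  rw [hτ]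
  exact isFactorizable_kronecker htr

lemma cnot_conj_kronecker_apply_eq_of_isFactorizable {ρ σ : Matrix (Fin 2) (Fin 2) ℂ}
    (h : IsFactorizable (CNOT * (ρ ⊗ₖ σ) * CNOT)) (i j k l : Fin 2) :
    ρ i k * σ (i + j) (k + l) =
      (ρ i k * ∑ m, σ (i + m) (k + m)) * ∑ m, ρ m m * σ (m + j) (m + l) := by
  have := congrFun (congrFun h (i, j)) (k, l)
  simpa [cnot_conj_apply, ptr2, ptr1, mul_add] using this

lemma Matrix.PosSemidef.normSq_apply_zero_one_le {M : Matrix (Fin 2) (Fin 2) ℂ}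
    (hM : M.PosSemidef) : (Complex.normSq (M 0 1) : ℂ) ≤ M 0 0 * M 1 1 := by
  have hdet := hM.det_nonneg
  rw [Matrix.det_fin_two, ← hM.1.apply 1 0, Complex.star_def, Complex.mul_conj] at hdet
  exact sub_nonneg.mp hdet

lemma Matrix.PosSemidef.apply_zero_one_eq_zero {M : Matrix (Fin 2) (Fin 2) ℂ}
    (hM : M.PosSemidef) (h : M 0 0 * M 1 1 = 0) : M 0 1 = 0 := by
  have := hM.normSq_apply_zero_one_le
  rw [h, ← Complex.ofReal_zero, Complex.real_le_real] at this
  exact Complex.normSq_eq_zero.mp (le_antisymm this (Complex.normSq_nonneg _))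

lemma cases_of_isFactorizable_of_mul_ne_zero {a₁ b₁ : ℝ} {a b : ℂ}
    (hmixed : (a₁ : ℂ) * (1 - a₁) ≠ 0)
    (h : IsFactorizable (CNOT * (!![(a₁ : ℂ), a; starRingEnd ℂ a, 1 - (a₁ : ℂ)] ⊗ₖ
      !![(b₁ : ℂ), b; starRingEnd ℂ b, 1 - (b₁ : ℂ)]) * CNOT)) :
    (a = 0 ∧ b₁ = 1 / 2 ∧ b.im = 0) ∨
      (!![(b₁ : ℂ), b; starRingEnd ℂ b, 1 - (b₁ : ℂ)] = (1 / 2 : ℂ) • !![1, 1; 1, 1] ∨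
        !![(b₁ : ℂ), b; starRingEnd ℂ b, 1 - (b₁ : ℂ)] = (1 / 2 : ℂ) • !![1, -1; -1, 1]) := by
  have E := cnot_conj_kronecker_apply_eq_of_isFactorizable h
  have E₁ := E 0 0 0 0
  have E₂ := E 0 0 0 1
  have E₃ := E 0 0 1 1
  simp only [of_apply, cons_val', cons_val_zero, cons_val_fin_one, add_zero, zero_add,
    Fin.sum_univ_two, cons_val_one, add_sub_cancel, mul_one, Fin.reduceAdd] at E₁ E₂ E₃
  have hb₁ : (b₁ : ℂ) = 1 / 2 := by
    have : (a₁ : ℂ) * (1 - a₁) * (2 * b₁ - 1) = 0 := by linear_combination E₁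
    linear_combination (mul_eq_zero.mp this).resolve_left hmixed / 2
  have hb : starRingEnd ℂ b = b := by
    have : (a₁ : ℂ) * (1 - a₁) * (b - starRingEnd ℂ b) = 0 := by linear_combination E₂
    linear_combination -(mul_eq_zero.mp this).resolve_left hmixed
  rw [hb, hb₁] at E₃
  have : a * ((2 * b - 1) * (2 * b + 1)) = 0 := by linear_combination -2 * E₃
  rcases mul_eq_zero.mp this with ha | hb'
  · exact Or.inl ⟨ha, Complex.ofReal_injective (by push_cast; exact hb₁),
      Complex.conj_eq_iff_im.mp hb⟩
  right
  rcases mul_eq_zero.mp hb' with hb' | hb'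
  · left
    rw [hb, hb₁, show b = 1 / 2 by linear_combination hb' / 2]
    ext i j; fin_cases i <;> fin_cases j <;> norm_num
  · right
    rw [hb, hb₁, show b = -(1 / 2) by linear_combination hb' / 2]
    ext i j; fin_cases i <;> fin_cases j <;> norm_num

lemma cases_of_isFactorizable {a₁ b₁ : ℝ} {a b : ℂ} {ρ σ : Matrix (Fin 2) (Fin 2) ℂ}
    (hρform : ρ = !![(a₁ : ℂ), a; starRingEnd ℂ a, 1 - (a₁ : ℂ)])
    (hσform : σ = !![(b₁ : ℂ), b; starRingEnd ℂ b, 1 - (b₁ : ℂ)])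
    (hρ : ρ.PosSemidef) (h : IsFactorizable (CNOT * (ρ ⊗ₖ σ) * CNOT)) :
    (a = 0 ∧ b₁ = 1 / 2 ∧ b.im = 0) ∨
      (ρ = !![1, 0; 0, 0] ∨ ρ = !![0, 0; 0, 1]) ∨
      (σ = (1 / 2 : ℂ) • !![1, 1; 1, 1] ∨ σ = (1 / 2 : ℂ) • !![1, -1; -1, 1]) := by
  subst hρform hσform
  rcases eq_or_ne ((a₁ : ℂ) * (1 - a₁)) 0 with hpure | hmixed
  · have ha : a = 0 := hρ.apply_zero_one_eq_zero hpure
    refine Or.inr (Or.inl ?_)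
    rcases mul_eq_zero.mp hpure with h₀ | h₁
    · right
      rw [ha, h₀]
      ext i j; fin_cases i <;> fin_cases j <;> simp
    · left
      rw [ha, show (a₁ : ℂ) = 1 by linear_combination -h₁]
      ext i j; fin_cases i <;> fin_cases j <;> simp
  · exact (cases_of_isFactorizable_of_mul_ne_zero hmixed h).imp_right Or.inr

lemma isFactorizable_of_cases {a₁ b₁ : ℝ} {a b : ℂ} {ρ σ : Matrix (Fin 2) (Fin 2) ℂ}
    (hρform : ρ = !![(a₁ : ℂ), a; starRingEnd ℂ a, 1 - (a₁ : ℂ)])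
    (hσform : σ = !![(b₁ : ℂ), b; starRingEnd ℂ b, 1 - (b₁ : ℂ)])
    (hρ1 : ρ.trace = 1) (hσ1 : σ.trace = 1)
    (h : (a = 0 ∧ b₁ = 1 / 2 ∧ b.im = 0) ∨
      (ρ = !![1, 0; 0, 0] ∨ ρ = !![0, 0; 0, 1]) ∨
      (σ = (1 / 2 : ℂ) • !![1, 1; 1, 1] ∨ σ = (1 / 2 : ℂ) • !![1, -1; -1, 1])) :
    IsFactorizable (CNOT * (ρ ⊗ₖ σ) * CNOT) := by
  rcases h with ⟨rfl, hb₁, hb⟩ | (rfl | rfl) | (rfl | rfl)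
  · rw [← Complex.conj_eq_iff_im] at hb
    refine isFactorizable_cnot_conj_of_apply_eq hρ1 hσ1 (X := ρ) (Y := σ) fun i j k l => ?_
    subst hρform hσform
    fin_cases i <;> fin_cases j <;> fin_cases k <;> fin_cases l <;> simp [hb, hb₁] <;> norm_num
  · refine isFactorizable_cnot_conj_of_apply_eq hρ1 hσ1
      (X := !![1, 0; 0, 0]) (Y := σ) fun i j k l => ?_
    fin_cases i <;> fin_cases j <;> fin_cases k <;> fin_cases l <;> simp
  · refine isFactorizable_cnot_conj_of_apply_eq hρ1 hσ1
      (X := !![0, 0; 0, 1]) (Y := σ.submatrix (· + 1) (· + 1)) fun i j k l => ?_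
    fin_cases i <;> fin_cases j <;> fin_cases k <;> fin_cases l <;> simp
  · refine isFactorizable_cnot_conj_of_apply_eq hρ1 hσ1
      (X := ρ) (Y := (1 / 2 : ℂ) • !![1, 1; 1, 1]) fun i j k l => ?_
    fin_cases i <;> fin_cases j <;> fin_cases k <;> fin_cases l <;> simp
  · refine isFactorizable_cnot_conj_of_apply_eq hρ1 hσ1
      (X := !![ρ 0 0, -ρ 0 1; -ρ 1 0, ρ 1 1]) (Y := (1 / 2 : ℂ) • !![1, -1; -1, 1])
      fun i j k l => ?_
    fin_cases i <;> fin_cases j <;> fin_cases k <;> fin_cases l <;> simp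

theorem cnot_factorizability_characterization_general
    (a₁ b₁ : ℝ) (a b : ℂ)
    (ρ σ : Matrix (Fin 2) (Fin 2) ℂ)
    (hρform : ρ = !![(a₁ : ℂ), a; starRingEnd ℂ a, 1 - (a₁ : ℂ)])
    (hσform : σ = !![(b₁ : ℂ), b; starRingEnd ℂ b, 1 - (b₁ : ℂ)])
    (hρ : ρ.PosSemidef) (hρ1 : ρ.trace = 1)
    (hσ1 : σ.trace = 1) :
    (CNOT * (ρ ⊗ₖ σ) * CNOT =
        ptr2 (CNOT * (ρ ⊗ₖ σ) * CNOT) ⊗ₖ ptr1 (CNOT * (ρ ⊗ₖ σ) * CNOT)) ↔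
      ((a = 0 ∧ b₁ = 1 / 2 ∧ b.im = 0) ∨
       (ρ = !![1, 0; 0, 0] ∨ ρ = !![0, 0; 0, 1]) ∨
       (σ = (1 / 2 : ℂ) • !![1, 1; 1, 1] ∨ σ = (1 / 2 : ℂ) • !![1, -1; -1, 1])) := by
  change IsFactorizable _ ↔ _
  exact ⟨cases_of_isFactorizable hρform hσform hρ, isFactorizable_of_cases hρform hσform hρ1 hσ1⟩

theorem cnot_factorizability_characterization
    (a₁ b₁ : ℝ) (a b : ℂ)
    (ha0 : 0 ≤ a₁) (ha1 : a₁ ≤ 1) (hb0 : 0 ≤ b₁) (hb1 : b₁ ≤ 1)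
    (ρ σ : Matrix (Fin 2) (Fin 2) ℂ)
    (hρform : ρ = !![(a₁ : ℂ), a; starRingEnd ℂ a, 1 - (a₁ : ℂ)])
    (hσform : σ = !![(b₁ : ℂ), b; starRingEnd ℂ b, 1 - (b₁ : ℂ)])
    (hρ : ρ.PosSemidef) (hρ1 : ρ.trace = 1)
    (hσ : σ.PosSemidef) (hσ1 : σ.trace = 1) :
    (CNOT * (ρ ⊗ₖ σ) * CNOT =
        ptr2 (CNOT * (ρ ⊗ₖ σ) * CNOT) ⊗ₖ ptr1 (CNOT * (ρ ⊗ₖ σ) * CNOT)) ↔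
      ((a = 0 ∧ b₁ = 1 / 2 ∧ b.im = 0) ∨
       (ρ = !![1, 0; 0, 0] ∨ ρ = !![0, 0; 0, 1]) ∨
       (σ = (1 / 2 : ℂ) • !![1, 1; 1, 1] ∨ σ = (1 / 2 : ℂ) • !![1, -1; -1, 1])) :=
  cnot_factorizability_characterization_general a₁ b₁ a b ρ σ hρform hσform hρ hρ1 hσ1
end
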